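/- arXiv:1702.01374 — 2 statements merged into one kernel-verified Lean document; each statement's English description precedes it below -/
import Mathlib

section
/- For any integer n ≥ 1 and any rational (or real) x, the binomial coefficient satisfies: C(x, n) = Σ_{i=1}^{n} (-1)^{i+1} · C(x-n+i, i) · C(x, n-i) · C(n, i) / C(2n-1, i), where C denotes the generalized binomial coefficient. -/
/-!
Since `C(x - (n - i), i) · C(x, n - i) = C(x, n) · C(n, i)`, every summand is `C(x, n)` times the
scalar `(-1)^(i+1) C(n, i)² / C(2n - 1, i)`, and it remains to see that these scalars sum to `1`.
Writing `n = m + 1`, the partial sums up to `k` telescope to `1 - (-1)^k C(m, k)² / C(2m + 1, k)`: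
by Pascal's rule and the ratio `C(N, k + 1) / C(N, k) = (N - k) / (k + 1)`, each summand splits as
`C(m + 1, k + 1)² / C(2m + 1, k + 1) = C(m, k)² / C(2m + 1, k) + C(m, k + 1)² / C(2m + 1, k + 1)`.
At `k = m + 1` the correction term vanishes.
-/

/-- Generalized binomial coefficient `C(x, k) = x(x-1)⋯(x-k+1)/k!` for rational `x`. -/
noncomputable def gchoose (x : ℚ) (k : ℕ) : ℚ :=
  (∏ i ∈ Finset.range k, (x - i)) / (Nat.factorial k)

open Polynomial in
theorem gchoose_eq_ringChoose (x : ℚ) (k : ℕ) : gchoose x k = Ring.choose x k := by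
  rw [gchoose, Ring.choose_eq_smul, ← aeval_eq_smeval, aeval_def, eval₂_eq_eval_map,
    descPochhammer_map, descPochhammer_eval_eq_prod_range, smul_eq_mul, div_eq_inv_mul]

theorem gchoose_sub_add_mul_gchoose {n i : ℕ} (hi : i ≤ n) (x : ℚ) :
    gchoose (x - n + i) i * gchoose x (n - i) = gchoose x n * n.choose i := by
  have h := Ring.choose_smul_choose x (Nat.sub_le n i)
  rw [Nat.sub_sub_self hi, Nat.choose_symm hi, Nat.cast_sub hi, nsmul_eq_mul, ← sub_add] at h
  simp only [gchoose_eq_ringChoose]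
  rw [mul_comm, mul_comm (Ring.choose x n), h]

theorem gchoose_natCast (m k : ℕ) : gchoose m k = m.choose k := by
  rw [gchoose_eq_ringChoose, Ring.choose_natCast]

theorem cast_choose_succ_mul {R : Type*} [Ring R] {n k : ℕ} (hk : k ≤ n) :
    (n.choose (k + 1) : R) * (k + 1) = n.choose k * (n - k) := by
  have h := congrArg (Nat.cast (R := R)) (Nat.choose_succ_right_eq n k)
  push_cast [Nat.cast_sub hk] at h
  exact h

theorem choose_succ_sq_div_choose {m k : ℕ} (hk : k ≤ m) :
    ((m + 1).choose (k + 1) : ℚ) ^ 2 / (2 * m + 1).choose (k + 1) =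
      (m.choose k : ℚ) ^ 2 / (2 * m + 1).choose k +
        (m.choose (k + 1) : ℚ) ^ 2 / (2 * m + 1).choose (k + 1) := by
  have hm := cast_choose_succ_mul (R := ℚ) hk
  have h2m := cast_choose_succ_mul (R := ℚ) (n := 2 * m + 1) (by omega : k ≤ 2 * m + 1)
  have hP : ((2 * m + 1).choose k : ℚ) ≠ 0 := by
    exact_mod_cast (Nat.choose_pos (by omega : k ≤ 2 * m + 1)).ne'
  have hQ : ((2 * m + 1).choose (k + 1) : ℚ) ≠ 0 := by
    exact_mod_cast (Nat.choose_pos (by omega : k + 1 ≤ 2 * m + 1)).ne'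
  have hratio : ((m.choose k : ℚ) + 2 * m.choose (k + 1)) * (2 * m + 1).choose k =
      m.choose k * (2 * m + 1).choose (k + 1) := by
    refine mul_left_cancel₀ (Nat.cast_add_one_ne_zero k) ?_
    push_cast at h2m
    linear_combination 2 * ((2 * m + 1).choose k : ℚ) * hm - (m.choose k : ℚ) * h2m
  rw [Nat.choose_succ_succ', Nat.cast_add]
  field_simp
  linear_combination (m.choose k : ℚ) * hratio

theorem sum_Icc_alternating_choose_sq_div (m k : ℕ) (hk : k ≤ m + 1) :
    ∑ i ∈ Finset.Icc 1 k, (-1 : ℚ) ^ (i + 1) * ((m + 1).choose i) ^ 2 / (2 * m + 1).choose i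
      = 1 - (-1 : ℚ) ^ k * (m.choose k) ^ 2 / (2 * m + 1).choose k := by
  induction k with
  | zero => simp
  | succ k ih =>
    rw [Finset.sum_Icc_succ_top (by omega), ih (by omega)]
    linear_combination (-1 : ℚ) ^ k * choose_succ_sq_div_choose (by omega : k ≤ m)

theorem stmt1 (n : ℕ) (hn : 1 ≤ n) (x : ℚ) :
    gchoose x n =
      ∑ i ∈ Finset.Icc 1 n, (-1 : ℚ) ^ (i + 1) * gchoose (x - n + i) i *
        gchoose x (n - i) * gchoose (n : ℚ) i / gchoose (2 * (n : ℚ) - 1) i := by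
  obtain ⟨m, rfl⟩ : ∃ m, n = m + 1 := ⟨n - 1, by omega⟩
  have hsum := sum_Icc_alternating_choose_sq_div m (m + 1) le_rfl
  rw [Nat.choose_succ_self, Nat.cast_zero, zero_pow two_ne_zero, mul_zero, zero_div,
    sub_zero] at hsum
  have hdenom : 2 * ((m + 1 : ℕ) : ℚ) - 1 = (2 * m + 1 : ℕ) := by push_cast; ring
  calc gchoose x (m + 1)
      = gchoose x (m + 1) * ∑ i ∈ Finset.Icc 1 (m + 1),
          (-1 : ℚ) ^ (i + 1) * ((m + 1).choose i) ^ 2 / (2 * m + 1).choose i := by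
        rw [hsum, mul_one]
    _ = _ := by
        rw [Finset.mul_sum]
        refine Finset.sum_congr rfl fun i hi => ?_
        rw [hdenom, gchoose_natCast, gchoose_natCast]
        linear_combination -(-1 : ℚ) ^ (i + 1) * ((m + 1).choose i : ℚ) / (2 * m + 1).choose i *
          gchoose_sub_add_mul_gchoose (Finset.mem_Icc.mp hi).2 x
end

section
/- For integers p, q ≥ 0 and any rational x, with k_{r,s}(x) := (-1)^{s-r} · C(x+s, s-r) · C(2r, r) / C(s+r, r) and λ_h(x) := ((-1)^{h-1}/2) · C(x+h-1, h-1) · C(x, h-1) / C(2h-3, h-2)^2 for h ≥ 2, the following addition formula holds: (-1)^{p+q} C(x+p+q, p+q) = k_{0,p}(x)·k_{0,q}(x) + Σ_{i=1}^{max(p,q)} λ_{i+1}(x) · k_{i,p}(x) · k_{i,q}(x). -/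
/-- `k_{r,s}(x) = (-1)^{s-r} C(x+s, s-r) C(2r, r) / C(s+r, r)`, vanishing when `s < r`. -/
noncomputable def kfun (x : ℚ) (r s : ℕ) : ℚ :=
  if r ≤ s then
    (-1 : ℚ) ^ (s - r) * gchoose (x + s) (s - r) * (Nat.choose (2 * r) r : ℚ) /
      gchoose ((s : ℚ) + r) r
  else 0

/-- The `h`-th modulus `λ_h(x) = ((-1)^{h-1}/2) C(x+h-1, h-1) C(x, h-1) / C(2h-3, h-2)^2`. -/
noncomputable def lam (x : ℚ) (h : ℕ) : ℚ :=
  ((-1 : ℚ) ^ (h - 1) / 2) * gchoose (x + h - 1) (h - 1) * gchoose x (h - 1) /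
    (gchoose (2 * (h : ℚ) - 3) (h - 2)) ^ 2

/-!
The functions `kfun x i` satisfy the three-term recurrence
`k_{i,s+1} = k_{i-1,s} + b_i k_{i,s} + c_i k_{i+1,s}` (with `b_i = kfunB x i`, `c_i = kfunC x i`),
so the vector `(k_{i,s})_i` is `J ^ s δ₀` for a tridiagonal operator `J`. The weights `w_0 = 1`,
`w_i = λ_{i+1}` satisfy `w_{i+1} = c_i w_i`, which makes `J` symmetric for the pairing
`⟨u, v⟩ = ∑ w_i u_i v_i`. Hence `⟨J ^ p δ₀, J ^ q δ₀⟩ = ⟨δ₀, J ^ (p + q) δ₀⟩ = k_{0,p+q}`,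
and `k_{0,s}(x) = (-1)^s C(x+s, s)`.
-/

open Finset

section JacobiRecurrence

variable {R : Type*} [CommRing R]

/-- `K · (s + 1) = J (K · s)` for the tridiagonal operator
`(J v)_i = a_i v_{i-1} + b_i v_i + c_i v_{i+1}`, which `w` makes symmetric. The condition `a 0 = 0`
kills the junk term `K (0 - 1) s = K 0 s`. -/
structure IsJacobiRecurrence (K : ℕ → ℕ → R) (a b c w : ℕ → R) : Prop where
  succ_right : ∀ i s, K i (s + 1) = a i * K (i - 1) s + b i * K i s + c i * K (i + 1) s
  a_zero : a 0 = 0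
  weight_succ : ∀ i, w (i + 1) * a (i + 1) = w i * c i
  eq_zero_of_lt : ∀ i s, s < i → K i s = 0

namespace IsJacobiRecurrence

variable {K : ℕ → ℕ → R} {a b c w : ℕ → R}

theorem sum_weight_mul_succ_left (hJ : IsJacobiRecurrence K a b c w) {n p : ℕ} (hp : p ≤ n)
    (q : ℕ) :
    ∑ i ∈ range (n + 1), w i * K i (p + 1) * K i q =
      ∑ i ∈ range (n + 1), w i * b i * K i p * K i q +
        ∑ i ∈ range n, w i * c i * (K i p * K (i + 1) q + K (i + 1) p * K i q) := by
  have lower : ∑ i ∈ range (n + 1), w i * a i * K (i - 1) p * K i q =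
      ∑ i ∈ range n, w i * c i * K i p * K (i + 1) q := by
    rw [sum_range_succ', hJ.a_zero]
    simp only [mul_zero, zero_mul, add_zero, Nat.add_sub_cancel, hJ.weight_succ]
  have upper : ∑ i ∈ range (n + 1), w i * c i * K (i + 1) p * K i q =
      ∑ i ∈ range n, w i * c i * K (i + 1) p * K i q := by
    rw [sum_range_succ, hJ.eq_zero_of_lt (n + 1) p (by omega), mul_zero, zero_mul, add_zero]
  calc ∑ i ∈ range (n + 1), w i * K i (p + 1) * K i q
      = ∑ i ∈ range (n + 1), w i * a i * K (i - 1) p * K i q +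
          ∑ i ∈ range (n + 1), w i * b i * K i p * K i q +
          ∑ i ∈ range (n + 1), w i * c i * K (i + 1) p * K i q := by
        simp only [← sum_add_distrib]
        exact sum_congr rfl fun i _ ↦ by rw [hJ.succ_right]; ring
    _ = _ := by
        rw [lower, upper]
        simp only [mul_add, sum_add_distrib, mul_assoc]
        ring

theorem sum_weight_mul_succ_left_eq_succ_right (hJ : IsJacobiRecurrence K a b c w)
    {N p q : ℕ} (hp : p < N) (hq : q < N) :
    ∑ i ∈ range N, w i * K i (p + 1) * K i q =
      ∑ i ∈ range N, w i * K i p * K i (q + 1) := by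
  obtain ⟨n, rfl⟩ : ∃ n, N = n + 1 := ⟨N - 1, by omega⟩
  rw [hJ.sum_weight_mul_succ_left (by omega),
    sum_congr rfl fun i _ ↦ mul_right_comm (w i) (K i p) (K i (q + 1)),
    hJ.sum_weight_mul_succ_left (by omega)]
  congr 1 <;> exact sum_congr rfl fun i _ ↦ by ring

theorem sum_weight_mul_mul_eq (hJ : IsJacobiRecurrence K a b c w) (hK₀ : K 0 0 = 1) {N : ℕ}
    (p q : ℕ) (hN : p + q < N) :
    ∑ i ∈ range N, w i * K i p * K i q = w 0 * K 0 (p + q) := by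
  induction q generalizing p with
  | zero =>
    rw [sum_eq_single_of_mem 0 (mem_range.2 (by omega)), hK₀, mul_one, add_zero]
    intro i _ hi
    rw [hJ.eq_zero_of_lt i 0 (by omega), mul_zero]
  | succ q ih =>
    rw [← hJ.sum_weight_mul_succ_left_eq_succ_right (by omega) (by omega),
      ih (p + 1) (by omega), Nat.add_right_comm, Nat.add_assoc]

end IsJacobiRecurrence

end JacobiRecurrence

theorem gchoose_zero (x : ℚ) : gchoose x 0 = 1 := by simp [gchoose]

theorem gchoose_succ (x : ℚ) (k : ℕ) : gchoose x (k + 1) = gchoose x k * (x - k) / (k + 1) := by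
  rw [gchoose, gchoose, prod_range_succ, Nat.factorial_succ]
  push_cast
  field_simp

theorem gchoose_add_one_succ (x : ℚ) (k : ℕ) :
    gchoose (x + 1) (k + 1) = gchoose x k * (x + 1) / (k + 1) := by
  rw [gchoose, gchoose, prod_range_succ', Nat.factorial_succ]
  push_cast
  simp only [add_sub_add_right_eq_sub, sub_zero]
  field_simp

theorem gchoose_add_one_mul (x : ℚ) (k : ℕ) :
    gchoose (x + 1) k * (x + 1 - k) = gchoose x k * (x + 1) := by
  have h := prod_range_succ' (fun j : ℕ ↦ x + 1 - j) k
  rw [prod_range_succ] at h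
  simp only [Nat.cast_add, Nat.cast_one, add_sub_add_right_eq_sub, Nat.cast_zero, sub_zero] at h
  rw [gchoose, gchoose, div_mul_eq_mul_div, h, mul_div_right_comm]

theorem gchoose_natCast_s5 (n k : ℕ) : gchoose n k = n.choose k := by
  rw [Nat.cast_choose_eq_descPochhammer_div, descPochhammer_eval_eq_prod_range, gchoose]

theorem gchoose_natCast_add_ne_zero (s k : ℕ) : gchoose ((s : ℚ) + k) k ≠ 0 := by
  rw [← Nat.cast_add, gchoose_natCast_s5]
  exact_mod_cast (Nat.choose_pos (Nat.le_add_left k s)).ne'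

section kfun

variable (x : ℚ)

theorem kfun_of_lt {i s : ℕ} (h : s < i) : kfun x i s = 0 := if_neg (by omega)

theorem kfun_self (i : ℕ) : kfun x i i = 1 := by
  have h := gchoose_natCast_s5 (2 * i) i
  have hc : ((2 * i).choose i : ℚ) ≠ 0 := by exact_mod_cast (Nat.choose_pos (by omega)).ne'
  push_cast at h
  rw [kfun, if_pos le_rfl, Nat.sub_self, ← two_mul, h, pow_zero, gchoose_zero, one_mul, one_mul,
    div_self hc]

theorem kfun_zero_left (s : ℕ) : kfun x 0 s = (-1) ^ s * gchoose (x + s) s := by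
  simp [kfun, gchoose_zero]

theorem kfun_succ_right {i s : ℕ} (h : i ≤ s) :
    kfun x i (s + 1) = -((x + s + 1) * (s + 1)) / ((s - i + 1) * (s + i + 1)) * kfun x i s := by
  have hnum := gchoose_add_one_succ (x + s) (s - i)
  have hden : gchoose ((s : ℚ) + i + 1) i * (s + 1) = gchoose (s + i) i * (s + i + 1) := by
    convert gchoose_add_one_mul ((s : ℚ) + i) i using 2
    ring
  have h0 := gchoose_natCast_add_ne_zero s i
  have h1 : ((s : ℚ) - i + 1) ≠ 0 := by
    have : (i : ℚ) ≤ s := by exact_mod_cast h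
    linarith
  rw [kfun, if_pos (by omega), kfun, if_pos h, Nat.sub_add_comm h, pow_succ]
  push_cast [Nat.cast_sub h] at hnum ⊢
  rw [show x + (s + 1) = x + s + 1 by ring, hnum, show (s : ℚ) + 1 + i = s + i + 1 by ring,
    eq_div_of_mul_eq (by positivity) hden]
  field_simp

theorem kfun_eq_mul_kfun_succ_left {i s : ℕ} (h : i < s) :
    kfun x i s = -((x + i + 1) * (s + i + 1)) / (2 * (2 * i + 1) * (s - i)) * kfun x (i + 1) s := by
  obtain ⟨t, rfl⟩ : ∃ t, s = i + 1 + t := ⟨s - (i + 1), by omega⟩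
  have hnum := gchoose_succ (x + ↑(i + 1 + t)) t
  have hden := gchoose_add_one_succ ((i + 1 + t : ℕ) + i : ℚ) i
  have hcentral :
      ((2 * (i + 1)).choose (i + 1) : ℚ) = 2 * (2 * i + 1) * (2 * i).choose i / (i + 1) := by
    rw [eq_div_iff (by positivity), mul_comm]
    exact_mod_cast Nat.succ_mul_centralBinom_succ i
  have h0 := gchoose_natCast_add_ne_zero (i + 1 + t) i
  have hc : ((2 * i).choose i : ℚ) ≠ 0 := by exact_mod_cast (Nat.choose_pos (by omega)).ne'
  rw [kfun, if_pos (by omega), kfun, if_pos (by omega), show i + 1 + t - i = t + 1 by omega,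
    show i + 1 + t - (i + 1) = t by omega, hnum, pow_succ, hcentral]
  push_cast at hden h0 ⊢
  rw [show (i : ℚ) + 1 + t + (i + 1) = i + 1 + t + i + 1 by ring, hden,
    show (i : ℚ) + 1 + t - i = t + 1 by ring]
  field_simp
  ring

end kfun

noncomputable def kfunB (x : ℚ) (i : ℕ) : ℚ := (x - 2 * i ^ 2 + 1) / (4 * i ^ 2 - 1)

noncomputable def kfunC (x : ℚ) (i : ℕ) : ℚ :=
  if i = 0 then -(x * (x + 1)) / 2 else -((x - i) * (x + i + 1)) / (4 * (2 * i + 1) ^ 2)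

section kfunRecurrence

variable (x : ℚ)

theorem kfunB_succ (i : ℕ) :
    kfunB x (i + 1) = (x - 2 * (i + 1) ^ 2 + 1) / ((2 * i + 1) * (2 * i + 3)) := by
  rw [kfunB]
  push_cast
  ring

theorem kfun_zero_succ_right (s : ℕ) :
    kfun x 0 (s + 1) = kfunB x 0 * kfun x 0 s + kfunC x 0 * kfun x 1 s := by
  rw [kfun_succ_right x (Nat.zero_le s), kfunB, kfunC, if_pos rfl]
  rcases Nat.eq_zero_or_pos s with rfl | hs
  · rw [kfun_self, kfun_of_lt x zero_lt_one]
    push_cast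
    ring
  · have hs' : (s : ℚ) ≠ 0 := by positivity
    rw [kfun_eq_mul_kfun_succ_left x hs]
    push_cast
    field_simp
    ring

theorem kfun_succ_succ_right (i s : ℕ) :
    kfun x (i + 1) (s + 1) =
      kfun x i s + kfunB x (i + 1) * kfun x (i + 1) s + kfunC x (i + 1) * kfun x (i + 2) s := by
  rcases lt_trichotomy s (i + 1) with hs | rfl | hs
  · rw [kfun_of_lt x (show s < i + 2 by omega), mul_zero, add_zero]
    obtain hs' | rfl : s < i ∨ s = i := by omega
    · simp [kfun_of_lt x hs', kfun_of_lt x hs, kfun_of_lt x (show s + 1 < i + 1 by omega)]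
    · simp [kfun_self, kfun_of_lt x hs]
  · rw [kfun_succ_right x le_rfl, kfun_self, kfun_eq_mul_kfun_succ_left x (Nat.lt_succ_self i),
      kfun_self, kfun_of_lt x (Nat.lt_succ_self _), kfunB_succ]
    push_cast
    field_simp
    ring
  · have hs' : (i : ℚ) + 1 < s := by exact_mod_cast hs
    have h1 : (s : ℚ) - i ≠ 0 := by linarith
    have h2 : (s : ℚ) - (i + 1) ≠ 0 := by linarith
    rw [kfun_succ_right x hs.le, kfun_eq_mul_kfun_succ_left x (show i < s by omega),
      kfun_eq_mul_kfun_succ_left x hs, kfunB_succ, kfunC, if_neg (Nat.succ_ne_zero i)]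
    push_cast
    rw [show (s : ℚ) - (i + 1) + 1 = s - i by ring]
    field_simp
    ring

end kfunRecurrence

noncomputable def kfunWeight (x : ℚ) (i : ℕ) : ℚ := if i = 0 then 1 else lam x (i + 1)

theorem lam_two (x : ℚ) : lam x 2 = -(x * (x + 1)) / 2 := by
  simp only [lam, Nat.add_one_sub_one, pow_one, Nat.cast_ofNat, gchoose_succ, gchoose_zero,
    CharP.cast_eq_zero, sub_zero, one_mul, zero_add, div_one, tsub_self, one_pow]
  ring

theorem lam_succ (x : ℚ) (i : ℕ) :
    lam x (i + 3) = lam x (i + 2) * (-((x - (i + 1)) * (x + i + 2)) / (4 * (2 * i + 3) ^ 2)) := by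
  have hnum := gchoose_add_one_succ (x + i + 1) (i + 1)
  have hden := gchoose_add_one_succ (2 * i + 2 : ℚ) i
  have hden' := gchoose_add_one_mul (2 * i + 1 : ℚ) i
  rw [show (2 * i + 1 : ℚ) + 1 = 2 * i + 2 by ring, show (2 * i + 2 : ℚ) - i = i + 2 by ring]
    at hden'
  have h0 : gchoose (2 * i + 1 : ℚ) i ≠ 0 := by
    convert gchoose_natCast_add_ne_zero (i + 1) i using 2
    push_cast
    ring
  simp only [lam, Nat.add_sub_cancel, show i + 3 - 1 = i + 2 by omega,
    show i + 3 - 2 = i + 1 by omega, show i + 2 - 1 = i + 1 by omega]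
  push_cast
  rw [show x + (i + 3) - 1 = x + i + 1 + 1 by ring, show x + (i + 2) - 1 = x + i + 1 by ring,
    show 2 * ((i : ℚ) + 3) - 3 = 2 * i + 2 + 1 by ring,
    show 2 * ((i : ℚ) + 2) - 3 = 2 * i + 1 by ring, hnum, hden, gchoose_succ x (i + 1),
    eq_div_of_mul_eq (by positivity) hden']
  push_cast
  field_simp
  ring

theorem kfunWeight_succ (x : ℚ) (i : ℕ) :
    kfunWeight x (i + 1) = kfunWeight x i * kfunC x i := by
  rcases i with _ | i
  · simp [kfunWeight, kfunC, lam_two]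
  · simp only [kfunWeight, kfunC, Nat.add_eq_zero_iff, one_ne_zero, and_false, if_false]
    push_cast
    rw [lam_succ]
    ring

theorem sum_kfunWeight_mul_kfun_mul_kfun (x : ℚ) (p q : ℕ) :
    ∑ i ∈ range (p + q + 1), kfunWeight x i * kfun x i p * kfun x i q = kfun x 0 (p + q) := by
  have hrec : ∀ i s, kfun x i (s + 1) = (if i = 0 then 0 else 1) * kfun x (i - 1) s +
      kfunB x i * kfun x i s + kfunC x i * kfun x (i + 1) s := by
    rintro (_ | i) s
    · simp [kfun_zero_succ_right]
    · simp [kfun_succ_succ_right]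
  have hw : ∀ i,
      kfunWeight x (i + 1) * (if i + 1 = 0 then 0 else 1) = kfunWeight x i * kfunC x i :=
    fun i ↦ by simp [kfunWeight_succ]
  have hJ : IsJacobiRecurrence (kfun x) (fun i ↦ if i = 0 then 0 else 1) (kfunB x) (kfunC x)
      (kfunWeight x) := ⟨hrec, if_pos rfl, hw, fun _ _ ↦ kfun_of_lt x⟩
  simpa [kfunWeight] using hJ.sum_weight_mul_mul_eq (kfun_self x 0) p q (Nat.lt_succ_self _)

theorem stmt5 (p q : ℕ) (x : ℚ) :
    (-1 : ℚ) ^ (p + q) * gchoose (x + p + q) (p + q) =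
      kfun x 0 p * kfun x 0 q +
        ∑ i ∈ Finset.Icc 1 (max p q), lam x (i + 1) * kfun x i p * kfun x i q := by
  have hvanish : ∀ i ∈ range (p + q + 1), i ∉ range (max p q + 1) →
      kfunWeight x i * kfun x i p * kfun x i q = 0 := fun i _ hi ↦ by
    rw [kfun_of_lt x (show p < i by rw [mem_range] at hi; omega), mul_zero, zero_mul]
  calc (-1 : ℚ) ^ (p + q) * gchoose (x + p + q) (p + q)
      = ∑ i ∈ range (p + q + 1), kfunWeight x i * kfun x i p * kfun x i q := by
        rw [sum_kfunWeight_mul_kfun_mul_kfun, kfun_zero_left, Nat.cast_add, add_assoc]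
    _ = ∑ i ∈ range (max p q + 1), kfunWeight x i * kfun x i p * kfun x i q :=
        (sum_subset (range_subset_range.2 (by omega)) hvanish).symm
    _ = _ := by
        rw [Nat.range_succ_eq_Icc_zero, ← insert_Icc_add_one_left_eq_Icc (Nat.zero_le _),
          sum_insert (by simp), zero_add]
        refine congrArg₂ (· + ·) (by simp [kfunWeight]) (sum_congr rfl fun i hi ↦ ?_)
        rw [kfunWeight, if_neg (by have := (mem_Icc.1 hi).1; omega)]
end
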